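/- Let a, b, c > 0. Define for K > 0 the function P(K) = π√K(−15a² + 10a(b − 2c)K + (−3b² + 4bc − 8c²)K²)/(4(a − Kb)³(a + Kc)^{5/2}) + 2π/((a − Kb)³√(b + c)). Then P extends continuously across K = a/b; i.e. the apparent singularities of the two terms at K = a/b cancel, and lim_{K→a/b} P(K) exists and is finite. -/
import Mathlib


open Real Filter

private lemma key_identity (a b c K s t w : ℝ)
    (hs2 : s ^ 2 = K) (ht2 : t ^ 2 = a + K * c) (hw2 : w ^ 2 = b + c)
    (ht0 : 0 < t) (hw0 : 0 < w) (hs0 : 0 < s)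
    (hne : a - K * b ≠ 0) :
    π * s *
        (-15 * a ^ 2 + 10 * a * (b - 2 * c) * K +
          (-3 * b ^ 2 + 4 * b * c - 8 * c ^ 2) * K ^ 2) /
      (4 * (a - K * b) ^ 3 * ((a + K * c) ^ 2 * t)) +
      2 * π / ((a - K * b) ^ 3 * w) =
    π * (8 * (a + K * c) + 9 * w * s * t + 3 * (b + c) * K) /
      (4 * (t + w * s) ^ 3 * ((a + K * c) ^ 2 * t) * w) := by
  have hA : a = t ^ 2 - K * c := by linarith
  have hB : b = w ^ 2 - c := by linarith
  subst hA
  subst hB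
  have hKeq : K = s ^ 2 := hs2.symm
  subst hKeq
  have hne' : t ^ 2 - s ^ 2 * w ^ 2 ≠ 0 := by
    intro h; apply hne; nlinarith [h]
  have htws : t + w * s ≠ 0 := by positivity
  have hne2 : t ^ 2 - s ^ 2 * c - s ^ 2 * (w ^ 2 - c) ≠ 0 := by
    intro h; apply hne'; nlinarith [h]
  field_simp
  ring

theorem removable_singularity_at_a_div_b (a b c : ℝ) (ha : 0 < a) (hb : 0 < b)
    (hc : 0 < c) :
    ∃ L : ℝ,
      Filter.Tendsto
        (fun K : ℝ =>
          π * Real.sqrt K *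
              (-15 * a ^ 2 + 10 * a * (b - 2 * c) * K +
                (-3 * b ^ 2 + 4 * b * c - 8 * c ^ 2) * K ^ 2) /
            (4 * (a - K * b) ^ 3 * ((a + K * c) ^ 2 * Real.sqrt (a + K * c))) +
          2 * π / ((a - K * b) ^ 3 * Real.sqrt (b + c)))
        (nhdsWithin (a / b) {K : ℝ | 0 < K ∧ K ≠ a / b}) (nhds L) := by
  set G : ℝ → ℝ := fun K =>
    π * (8 * (a + K * c) + 9 * Real.sqrt (b + c) * Real.sqrt K * Real.sqrt (a + K * c)
        + 3 * (b + c) * K) /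
      (4 * (Real.sqrt (a + K * c) + Real.sqrt (b + c) * Real.sqrt K) ^ 3 *
        ((a + K * c) ^ 2 * Real.sqrt (a + K * c)) * Real.sqrt (b + c)) with hG
  refine ⟨G (a / b), ?_⟩
  have hK0 : (0:ℝ) < a / b := div_pos ha hb
  have hcont : ContinuousAt G (a / b) := by
    apply ContinuousAt.div
    · fun_prop
    · fun_prop
    · have h1 : (0:ℝ) < a + (a / b) * c := by positivity
      have h2 : (0:ℝ) < Real.sqrt (a + (a / b) * c) := Real.sqrt_pos.2 h1
      have h3 : (0:ℝ) < Real.sqrt (b + c) := Real.sqrt_pos.2 (by positivity)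
      have h4 : (0:ℝ) < Real.sqrt (a / b) := Real.sqrt_pos.2 hK0
      positivity
  have hG' : Tendsto G (nhdsWithin (a / b) {K : ℝ | 0 < K ∧ K ≠ a / b}) (nhds (G (a / b))) :=
    hcont.continuousWithinAt.tendsto
  refine Tendsto.congr' ?_ hG'
  filter_upwards [self_mem_nhdsWithin] with K hK
  obtain ⟨hKpos, hKne⟩ := hK
  have hne : a - K * b ≠ 0 := by
    intro h
    apply hKne
    field_simp
    linarith
  have haKc : (0:ℝ) < a + K * c := by positivity
  have hbc : (0:ℝ) < b + c := by positivity
  rw [hG]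
  exact (key_identity a b c K (Real.sqrt K) (Real.sqrt (a + K * c)) (Real.sqrt (b + c))
    (Real.sq_sqrt hKpos.le) (Real.sq_sqrt haKc.le) (Real.sq_sqrt hbc.le)
    (Real.sqrt_pos.2 haKc) (Real.sqrt_pos.2 hbc) (Real.sqrt_pos.2 hKpos) hne).symm
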